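/- arXiv:1403.4404 — 6 statements merged into one kernel-verified Lean document; each statement's English description precedes it below -/
import Mathlib

section
/- For any graph G, the Mycielskian M(G) satisfies χ(M(G)) = χ(G) + 1, provided G has at least one edge. -/
/-!
An `n`-colouring of `G` extends to an `(n + 1)`-colouring of its Mycielskian by giving each twin
the colour of its original vertex and the root a new colour. Conversely, given an
`(n + 1)`-colouring of the Mycielskian, recolour every original vertex that carries the root's
colour `k` with the colour of its twin: twins are adjacent to the root, so never coloured `k`, and
a twin is adjacent to the neighbours of its original vertex, so the result is a proper colouring
of `G` avoiding `k`. Hence `M(G)` is `(n + 1)`-colourable iff `G` is `n`-colourable, and since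
`M(G)` has a vertex this pins down its chromatic number.
-/

/-- Adjacency of the Mycielskian: vertices are `Sum.inl u` (original vertices),
`Sum.inr (Sum.inl v)` (twin vertices) and `Sum.inr (Sum.inr ())` (the root). -/
def mycAdj {V : Type*} (G : SimpleGraph V) : (V ⊕ V ⊕ Unit) → (V ⊕ V ⊕ Unit) → Prop
  | .inl u, .inl u' => G.Adj u u'
  | .inl u, .inr (.inl v) => G.Adj u v
  | .inr (.inl v), .inl u => G.Adj v u
  | .inr (.inl _), .inr (.inr _) => True
  | .inr (.inr _), .inr (.inl _) => True
  | _, _ => False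

/-- The Mycielskian of a graph. -/
def mycielskian {V : Type*} (G : SimpleGraph V) : SimpleGraph (V ⊕ V ⊕ Unit) where
  Adj := mycAdj G
  symm := by
    constructor
    rintro (u | v | w) (u' | v' | w') h <;> simp_all [mycAdj] <;> exact G.adj_symm h
  loopless := by
    constructor
    rintro (u | v | w) h <;> simp_all [mycAdj]

namespace SimpleGraph

variable {V : Type*} {G : SimpleGraph V} {n : ℕ}

theorem Colorable.mycielskian_add_one (hG : G.Colorable n) :
    (mycielskian G).Colorable (n + 1) := by
  obtain ⟨c⟩ := hG
  refine ⟨Coloring.mk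
    (Sum.elim (Fin.castSucc ∘ c) (Sum.elim (Fin.castSucc ∘ c) fun _ ↦ Fin.last n)) ?_⟩
  rintro (u | u | _) (u' | u' | _) hadj <;> simp only [_root_.mycielskian, mycAdj] at hadj <;>
    simp [Fin.castSucc_ne_last, (Fin.castSucc_ne_last _).symm, c.valid, hadj]

theorem Colorable.of_mycielskian_add_one (hM : (mycielskian G).Colorable (n + 1)) :
    G.Colorable n := by
  obtain ⟨c⟩ := hM
  set k := c (.inr (.inr ()))
  have twin_ne_root (u : V) : c (.inr (.inl u)) ≠ k := c.valid trivial
  let d (u : V) : {x // x ≠ k} :=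
    if h : c (.inl u) = k then ⟨_, twin_ne_root u⟩ else ⟨_, h⟩
  have hd {u u' : V} (hadj : G.Adj u u') : d u ≠ d u' := by
    have h₁ : c (.inl u) ≠ c (.inl u') := c.valid hadj
    have h₂ : c (.inr (.inl u)) ≠ c (.inl u') := c.valid hadj
    have h₃ : c (.inl u) ≠ c (.inr (.inl u')) := c.valid hadj
    simp only [d]
    split_ifs with hu hu' hu' <;> simp only [ne_eq, Subtype.mk.injEq]
    exacts [fun _ ↦ h₁ (hu.trans hu'.symm), h₂, h₃, h₁]
  simpa using (Coloring.mk d hd).colorable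

theorem mycielskian_colorable_add_one_iff :
    (mycielskian G).Colorable (n + 1) ↔ G.Colorable n :=
  ⟨Colorable.of_mycielskian_add_one, Colorable.mycielskian_add_one⟩

theorem chromaticNumber_eq_add_one_of_colorable_add_one_iff {W : Type*} [Nonempty W]
    {H : SimpleGraph W} (h : ∀ n, H.Colorable (n + 1) ↔ G.Colorable n) :
    H.chromaticNumber = G.chromaticNumber + 1 := by
  refine eq_of_forall_ge_iff fun c ↦ ?_
  induction c using ENat.recTopCoe with
  | top => simp
  | coe m =>
    cases m with
    | zero => simp
    | succ m =>
      rw [chromaticNumber_le_iff_colorable, h, Nat.cast_succ,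
        ENat.add_le_add_iff_right ENat.one_ne_top, chromaticNumber_le_iff_colorable]

end SimpleGraph

theorem stmt_3_general {V : Type*} (G : SimpleGraph V) :
    (mycielskian G).chromaticNumber = G.chromaticNumber + 1 :=
  SimpleGraph.chromaticNumber_eq_add_one_of_colorable_add_one_iff
    fun _ ↦ SimpleGraph.mycielskian_colorable_add_one_iff

theorem stmt_3 {V : Type*} (G : SimpleGraph V) (h : ∃ u v, G.Adj u v) :
    (mycielskian G).chromaticNumber = G.chromaticNumber + 1 :=
  stmt_3_general G
end

section
/- The Kneser graph KG(n,k), with vertices the k-subsets of [n] and edges between disjoint subsets, admits a proper coloring with n − 2k + 2 colors when n ≥ 2k. -/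
/-!
Colour a `k`-set `A` by `min (min A) (n - 2k + 1)`. Two disjoint sets with the same colour below
`n - 2k + 1` would share their least element, and two sets of colour `n - 2k + 1` both lie in the
last `2k - 1` points of `[n]`, which hold no two disjoint `k`-sets.
-/

/-- The Kneser graph `KG(n,k)`: vertices are the `k`-subsets of `[n]`,
adjacent iff disjoint. -/
def kneserGraph (n k : ℕ) : SimpleGraph {s : Finset (Fin n) // s.card = k} where
  Adj A B := A ≠ B ∧ Disjoint A.1 B.1
  symm := ⟨fun _ _ ⟨h1, h2⟩ => ⟨h1.symm, h2.symm⟩⟩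
  loopless := ⟨fun _ ⟨h, _⟩ => h rfl⟩

open Finset

theorem Fin.card_filter_le_val (n t : ℕ) : #{x : Fin n | t ≤ (x : ℕ)} = n - t := by
  have := card_filter_add_card_filter_not (s := univ) fun x : Fin n => (x : ℕ) < t
  simp only [not_lt, card_univ, Fintype.card_fin, Fin.card_filter_val_lt] at this
  omega

section

variable {n k : ℕ}

theorem kneserGraph_not_adj_of_subset {S : Finset (Fin n)} (hS : #S < 2 * k)
    {A B : {s : Finset (Fin n) // #s = k}} (hA : A.1 ⊆ S) (hB : B.1 ⊆ S) :
    ¬ (kneserGraph n k).Adj A B := by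
  rintro ⟨-, hAB⟩
  have := card_le_card (union_subset hA hB)
  rw [card_union_of_disjoint hAB, A.2, B.2] at this
  omega

theorem kneserGraph_zero_colorable (m : ℕ) : (kneserGraph n 0).Colorable (m + 1) :=
  ⟨.mk (fun _ => 0) fun {A B} hAB _ =>
    hAB.1 (Subtype.ext ((card_eq_zero.1 A.2).trans (card_eq_zero.1 B.2).symm))⟩

theorem kneserGraph_colorable_of_pos (hk : 0 < k) :
    (kneserGraph n k).Colorable (n - 2 * k + 2) := by
  set t := n - 2 * k + 1
  have hne (A : {s : Finset (Fin n) // #s = k}) : A.1.Nonempty := card_pos.1 (A.2.symm ▸ hk)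
  have hsmall : ∀ {A B}, (kneserGraph n k).Adj A B →
      (A.1.min' (hne A) : ℕ) < t ∨ (B.1.min' (hne B) : ℕ) < t := by
    intro A B hAB
    by_contra! hle
    refine kneserGraph_not_adj_of_subset (S := {x | t ≤ (x : ℕ)})
      (by rw [Fin.card_filter_le_val]; omega) ?_ ?_ hAB
    · exact fun x hx => mem_filter.2 ⟨mem_univ x, hle.1.trans (min'_le _ x hx)⟩
    · exact fun x hx => mem_filter.2 ⟨mem_univ x, hle.2.trans (min'_le _ x hx)⟩
  refine ⟨.mk (fun A => ⟨min (A.1.min' (hne A) : ℕ) t, by omega⟩) fun {A B} hAB hc => ?_⟩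
  have hmin : A.1.min' (hne A) = B.1.min' (hne B) := by
    have := hsmall hAB
    have := congrArg Fin.val hc
    dsimp only at this
    omega
  exact hAB.2.forall_ne_finset (min'_mem _ _) (min'_mem _ _) hmin

end

theorem stmt_7_general (n k : ℕ) :
    (kneserGraph n k).Colorable (n - 2 * k + 2) := by
  obtain rfl | hk := Nat.eq_zero_or_pos k
  · exact kneserGraph_zero_colorable _
  · exact kneserGraph_colorable_of_pos hk

theorem stmt_7 (n k : ℕ) (h : 2 * k ≤ n) :
    (kneserGraph n k).Colorable (n - 2 * k + 2) :=
  stmt_7_general n k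
end

section
/- For the natural ordering I : 1 < 2 < ... < n on [n] and the hypergraph whose hyperedges are the 2-stable k-subsets of [n] (n ≥ 2k), the strong alternation parameter salt_I equals 2k − 1; that is, there exists X ∈ {−1,0,+1}^n with alternation number 2k−1 such that at most one of the positive support X⁺ and negative support X⁻ contains a 2-stable k-subset, and for every X with alternation number 2k both X⁺ and X⁻ contain a 2-stable k-subset. -/
/-!
Take a longest alternating sequence `a₀ < a₁ < ⋯ < a_{2k-1}` in `[n]`. Its entries in even
positions form a `k`-set of one sign and those in odd positions a `k`-set of the other sign.
Within a class consecutive entries are at least `2` apart, and each class skips an entry at one end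
of the sequence (`a_{2k-1}` or `a₀`), so its span is at most `n - 2`: both classes are 2-stable.
Conversely, `+1, -1, …, +1` on `1, …, 2k - 1` has alternation number `2k - 1` but only `k - 1`
negative entries.
-/

/-- `l` is an alternating list for `X` within the ground set `[n] = {1,…,n}`. -/
def IsAltList (n : ℕ) (X : ℕ → ℤ) (l : List ℕ) : Prop :=
  (∀ a ∈ l, a ∈ Finset.Icc 1 n) ∧ (∀ a ∈ l, X a ≠ 0) ∧
    l.Chain' (fun a b => a < b ∧ X a * X b < 0)

/-- The alternation number of `X` over `[n]`. -/
noncomputable def altNum (n : ℕ) (X : ℕ → ℤ) : ℕ :=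
  sSup {m : ℕ | ∃ l : List ℕ, l.length = m ∧ IsAltList n X l}

/-- The positive support `X⁺ = {i ∈ [n] : x_i = 1}`. -/
def posSupp (n : ℕ) (X : ℕ → ℤ) : Finset ℕ :=
  (Finset.Icc 1 n).filter (fun i => X i = 1)

/-- The negative support `X⁻ = {i ∈ [n] : x_i = -1}`. -/
def negSupp (n : ℕ) (X : ℕ → ℤ) : Finset ℕ :=
  (Finset.Icc 1 n).filter (fun i => X i = -1)

/-- `S` is a 2-stable subset of `[n]`. -/
def TwoStableSet (n : ℕ) (S : Finset ℕ) : Prop :=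
  S ⊆ Finset.Icc 1 n ∧ ∀ i ∈ S, ∀ j ∈ S, i ≠ j →
    2 ≤ |(i : ℤ) - (j : ℤ)| ∧ |(i : ℤ) - (j : ℤ)| ≤ (n : ℤ) - 2

/-- `A` contains a 2-stable `k`-subset of `[n]`. -/
def ContainsStable (n k : ℕ) (A : Finset ℕ) : Prop :=
  ∃ S ⊆ A, S.card = k ∧ TwoStableSet n S

open Finset

lemma add_mul_sub_le_of_step {f : ℕ → ℕ} {m d : ℕ}
    (h : ∀ i, i + 1 < m → f i + d ≤ f (i + 1)) {i j : ℕ} (hij : i ≤ j) (hj : j < m) :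
    f i + d * (j - i) ≤ f j := by
  induction j, hij using Nat.le_induction with
  | base => simp
  | succ j hij ih =>
    have hstep := h j hj
    have hprev := ih (by omega)
    rw [Nat.sub_add_comm hij, mul_add_one]
    omega

lemma eq_of_neg_step {f : ℕ → ℤ} {m : ℕ} (h : ∀ i, i + 1 < m → f (i + 1) = -f i)
    {p i : ℕ} (hi : p + 2 * i < m) : f (p + 2 * i) = f p := by
  induction i with
  | zero => rfl
  | succ i ih =>
    rw [show p + 2 * (i + 1) = p + 2 * i + 1 + 1 by ring, h _ (by omega), h _ (by omega),
      neg_neg, ih (by omega)]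

lemma eq_neg_of_mul_neg_of_sign_values {x y : ℤ} (hx : x = -1 ∨ x = 0 ∨ x = 1)
    (hy : y = -1 ∨ y = 0 ∨ y = 1) (h : x * y < 0) : y = -x := by
  rcases hx with rfl | rfl | rfl <;> rcases hy with rfl | rfl | rfl <;> omega

section Alternation

variable {n : ℕ} {X : ℕ → ℤ} {l : List ℕ}

lemma IsAltList.length_le_card (h : IsAltList n X l) {s : Finset ℕ} (hs : ∀ a ∈ l, a ∈ s) :
    l.length ≤ #s := by
  have hnodup : l.Nodup := (h.2.2.imp fun _ _ hab => hab.1).pairwise.imp Nat.ne_of_lt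
  rw [← List.toFinset_card_of_nodup hnodup]
  exact card_le_card fun a ha => hs a (List.mem_toFinset.mp ha)

lemma IsAltList.length_le (h : IsAltList n X l) : l.length ≤ n := by
  simpa using h.length_le_card h.1

lemma altNum_eq_of_forall_length_le {m : ℕ} (hw : ∃ l, l.length = m ∧ IsAltList n X l)
    (hub : ∀ l, IsAltList n X l → l.length ≤ m) : altNum n X = m := by
  have hm : m ∈ upperBounds {m | ∃ l, l.length = m ∧ IsAltList n X l} := by
    rintro _ ⟨l, rfl, hl⟩
    exact hub l hl
  exact le_antisymm (csSup_le ⟨m, hw⟩ hm) (le_csSup ⟨m, hm⟩ hw)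

lemma exists_isAltList_length_eq_altNum (n : ℕ) (X : ℕ → ℤ) :
    ∃ l, l.length = altNum n X ∧ IsAltList n X l :=
  Nat.sSup_mem (s := {m | ∃ l' : List ℕ, l'.length = m ∧ IsAltList n X l'})
    ⟨0, [], rfl, by simp, by simp, List.isChain_nil⟩
    ⟨n, by rintro _ ⟨l', rfl, hl'⟩; exact hl'.length_le⟩

lemma IsAltList.getD_mem (h : IsAltList n X l) {i : ℕ} (hi : i < l.length) :
    l.getD i 0 ∈ Icc 1 n ∧ X (l.getD i 0) ≠ 0 := by
  rw [List.getD_eq_getElem _ _ hi]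
  exact ⟨h.1 _ (List.getElem_mem hi), h.2.1 _ (List.getElem_mem hi)⟩

lemma IsAltList.getD_succ (h : IsAltList n X l) {i : ℕ} (hi : i + 1 < l.length) :
    l.getD i 0 < l.getD (i + 1) 0 ∧ X (l.getD i 0) * X (l.getD (i + 1) 0) < 0 := by
  rw [List.getD_eq_getElem _ _ hi, List.getD_eq_getElem _ _ (by omega)]
  exact h.2.2.getElem i hi

end Alternation

lemma twoStableSet_of_lt {n : ℕ} {S : Finset ℕ} (hS : S ⊆ Icc 1 n)
    (h : ∀ i ∈ S, ∀ j ∈ S, i < j → i + 2 ≤ j ∧ j + 2 ≤ i + n) :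
    TwoStableSet n S := by
  refine ⟨hS, fun i hi j hj hij => ?_⟩
  rcases hij.lt_or_gt with hlt | hlt
  · have := h i hi j hj hlt
    rw [abs_sub_comm, abs_of_nonneg (by omega)]
    omega
  · have := h j hj i hi hlt
    rw [abs_of_nonneg (by omega)]
    omega

lemma twoStableSet_image_range {b : ℕ → ℕ} {n k : ℕ}
    (hstep : ∀ i, i + 1 < k → b i + 2 ≤ b (i + 1)) (hfirst : 1 ≤ b 0)
    (hlast : b (k - 1) ≤ n) (hspan : b (k - 1) + 2 ≤ b 0 + n) :
    TwoStableSet n ((range k).image b) ∧ #((range k).image b) = k := by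
  have hspread {i j : ℕ} (hij : i ≤ j) (hj : j < k) : b i + 2 * (j - i) ≤ b j :=
    add_mul_sub_le_of_step hstep hij hj
  have hlt {i j : ℕ} (hij : i < j) (hj : j < k) : b i + 2 ≤ b j := by
    have := hspread hij.le hj
    omega
  constructor
  · refine twoStableSet_of_lt ?_ ?_
    · intro x hx
      obtain ⟨i, hi, rfl⟩ := mem_image.mp hx
      rw [mem_range] at hi
      have := hspread (Nat.zero_le i) hi
      have := hspread (show i ≤ k - 1 by omega) (by omega)
      simp only [mem_Icc]
      omega
    · simp only [mem_image, mem_range]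
      rintro _ ⟨i, hi, rfl⟩ _ ⟨j, hj, rfl⟩ hbij
      have hij : i < j := by
        by_contra! hji
        rcases hji.lt_or_eq with hji | rfl
        · have := hlt hji hi
          omega
        · exact lt_irrefl _ hbij
      have := hspread (Nat.zero_le i) hi
      have := hspread (show j ≤ k - 1 by omega) (by omega)
      exact ⟨hlt hij hj, by omega⟩
  · rw [card_image_of_injOn, card_range]
    intro i hi j hj hbij
    simp only [coe_range, Set.mem_Iio] at hi hj
    by_contra hne
    rcases Nat.lt_or_gt_of_ne hne with hij | hji
    · have := hlt hij hj
      omega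
    · have := hlt hji hi
      omega

lemma ContainsStable.le_card {n k : ℕ} {A : Finset ℕ} (h : ContainsStable n k A) :
    k ≤ #A := by
  obtain ⟨S, hS, rfl, -⟩ := h
  exact card_le_card hS

lemma containsStable_filter_of_forall_eq {n k : ℕ} {X : ℕ → ℤ} {v : ℤ} {S : Finset ℕ}
    (hS : TwoStableSet n S) (hcard : #S = k) (hv : ∀ x ∈ S, X x = v) :
    ContainsStable n k ((Icc 1 n).filter (X · = v)) :=
  ⟨S, fun x hx => mem_filter.mpr ⟨hS.1 hx, hv x hx⟩, hcard, hS⟩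

lemma twoStableSet_image_parity {a : ℕ → ℕ} {n k p : ℕ} (hk : 1 ≤ k) (hp : p ≤ 1)
    (hstep : ∀ i, i + 1 < 2 * k → a i + 1 ≤ a (i + 1)) (hfirst : 1 ≤ a 0)
    (hlast : a (2 * k - 1) ≤ n) :
    TwoStableSet n ((range k).image fun i => a (p + 2 * i)) ∧
      #((range k).image fun i => a (p + 2 * i)) = k := by
  have hspread {i j : ℕ} (hij : i ≤ j) (hj : j < 2 * k) : a i + 1 * (j - i) ≤ a j :=
    add_mul_sub_le_of_step hstep hij hj
  refine twoStableSet_image_range (fun i hi => ?_) (show 1 ≤ a p from ?_) ?_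
    (show a (p + 2 * (k - 1)) + 2 ≤ a p + n from ?_)
  · have := hspread (show p + 2 * i ≤ p + 2 * (i + 1) by omega) (by omega)
    omega
  · have := hspread (Nat.zero_le p) (by omega)
    omega
  · have := hspread (show p + 2 * (k - 1) ≤ 2 * k - 1 by omega) (by omega)
    omega
  · have := hspread (Nat.zero_le p) (by omega)
    have := hspread (show p + 2 * (k - 1) ≤ 2 * k - 1 by omega) (by omega)
    omega

lemma containsStable_of_altNum_eq {n k : ℕ} {X : ℕ → ℤ} (hk : 1 ≤ k)
    (hX : ∀ i ∈ Icc 1 n, X i = -1 ∨ X i = 0 ∨ X i = 1) (halt : altNum n X = 2 * k)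
    {v : ℤ} (hv : v = 1 ∨ v = -1) : ContainsStable n k ((Icc 1 n).filter (X · = v)) := by
  obtain ⟨l, hlen, hl⟩ := exists_isAltList_length_eq_altNum n X
  rw [halt] at hlen
  set a : ℕ → ℕ := fun i => l.getD i 0
  have hmem {i : ℕ} (hi : i < 2 * k) : a i ∈ Icc 1 n ∧ X (a i) ≠ 0 := hl.getD_mem (by omega)
  have hsign (i : ℕ) (hi : i + 1 < 2 * k) : X (a (i + 1)) = -X (a i) :=
    eq_neg_of_mul_neg_of_sign_values (hX _ (hmem (by omega)).1) (hX _ (hmem hi).1)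
      (hl.getD_succ (by omega)).2
  obtain ⟨p, hp, hXp⟩ : ∃ p ≤ 1, X (a p) = v := by
    have h0 := hX _ (hmem (show 0 < 2 * k by omega)).1
    have hne := (hmem (show 0 < 2 * k by omega)).2
    rcases (show v = X (a 0) ∨ v = -X (a 0) by omega) with h | h
    · exact ⟨0, zero_le_one, h.symm⟩
    · exact ⟨1, le_rfl, (hsign 0 (by omega)).trans h.symm⟩
  obtain ⟨hS, hcard⟩ := twoStableSet_image_parity (a := a) (n := n) hk hp
    (fun i hi => (hl.getD_succ (by omega)).1) (mem_Icc.mp (hmem (by omega)).1).1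
    (mem_Icc.mp (hmem (by omega)).1).2
  refine containsStable_filter_of_forall_eq hS hcard ?_
  simp only [mem_image, mem_range]
  rintro _ ⟨i, hi, rfl⟩
  exact (eq_of_neg_step (f := fun j => X (a j)) hsign (by omega)).trans hXp

def alternatingPrefix (k i : ℕ) : ℤ :=
  if i ∈ Icc 1 (2 * k - 1) then (-1) ^ (i + 1) else 0

section AlternatingPrefix

variable (n k : ℕ)

lemma alternatingPrefix_sign_values (i : ℕ) :
    alternatingPrefix k i = -1 ∨ alternatingPrefix k i = 0 ∨ alternatingPrefix k i = 1 := by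
  unfold alternatingPrefix
  split_ifs
  · rcases neg_one_pow_eq_or ℤ (i + 1) with h | h <;> simp [h]
  · simp

lemma altNum_alternatingPrefix (hn : 2 * k - 1 ≤ n) :
    altNum n (alternatingPrefix k) = 2 * k - 1 := by
  refine altNum_eq_of_forall_length_le ⟨List.range' 1 (2 * k - 1), by simp, ?_, ?_, ?_⟩ ?_
  · intro a ha
    rw [List.mem_range'_1] at ha
    simp only [mem_Icc]
    omega
  · intro a ha
    rw [List.mem_range'_1] at ha
    simp [alternatingPrefix, show 1 ≤ a ∧ a ≤ 2 * k - 1 by omega]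
  · refine List.isChain_iff_getElem.mpr fun i hi => ?_
    simp only [List.length_range'] at hi
    simp only [List.getElem_range', alternatingPrefix, mem_Icc]
    rw [if_pos (by omega), if_pos (by omega), ← pow_add]
    exact ⟨by omega, by rw [Odd.neg_one_pow ⟨i + 2, by ring⟩]; norm_num⟩
  · intro l hl
    have := hl.length_le_card fun a ha => by
      by_contra hout
      exact hl.2.1 a ha (if_neg hout)
    rw [Nat.card_Icc] at this
    omega

lemma card_negSupp_alternatingPrefix_le : #(negSupp n (alternatingPrefix k)) ≤ k - 1 := by
  have hsub : negSupp n (alternatingPrefix k) ⊆ (Icc 1 (k - 1)).image (2 * ·) := by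
    intro i hi
    unfold negSupp alternatingPrefix at hi
    rw [mem_filter] at hi
    split_ifs at hi with hrange
    · obtain ⟨j, hj⟩ := (neg_one_pow_eq_neg_one_iff_odd (by norm_num)).mp hi.2
      simp only [mem_Icc] at hrange
      exact mem_image.mpr ⟨j, mem_Icc.mpr (by omega), by omega⟩
    · simp at hi
  calc #(negSupp n (alternatingPrefix k))
      ≤ #((Icc 1 (k - 1)).image (2 * ·)) := card_le_card hsub
    _ ≤ #(Icc 1 (k - 1)) := card_image_le
    _ = k - 1 := by simp

end AlternatingPrefix

theorem stmt_9 (n k : ℕ) (hk : 1 ≤ k) (hn : 2 * k ≤ n) :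
    (∃ X : ℕ → ℤ, (∀ i ∈ Finset.Icc 1 n, X i = -1 ∨ X i = 0 ∨ X i = 1) ∧
      altNum n X = 2 * k - 1 ∧
      ¬(ContainsStable n k (posSupp n X) ∧ ContainsStable n k (negSupp n X))) ∧
    (∀ X : ℕ → ℤ, (∀ i ∈ Finset.Icc 1 n, X i = -1 ∨ X i = 0 ∨ X i = 1) →
      altNum n X = 2 * k →
      ContainsStable n k (posSupp n X) ∧ ContainsStable n k (negSupp n X)) := by
  refine ⟨⟨alternatingPrefix k, fun i _ => alternatingPrefix_sign_values k i,
    altNum_alternatingPrefix n k (by omega), fun ⟨_, hneg⟩ => ?_⟩,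
    fun X hX halt => ⟨containsStable_of_altNum_eq hk hX halt (Or.inl rfl),
      containsStable_of_altNum_eq hk hX halt (Or.inr rfl)⟩⟩
  have := hneg.le_card
  have := card_negSupp_alternatingPrefix_le n k
  omega
end

section
/- For positive integers m, n, k with n ≥ 2k: χ_m(KG(n,k)) ≤ ⌈m/k⌉(n − 2k) + 2m, where χ_m is the m-th multichromatic number. -/
/-- The `m`-th multichromatic number: the least `C` such that `G` admits a
homomorphism to `KG(C,m)` (an `m`-fold `C`-coloring). -/
noncomputable def multiChrom {V : Type*} (G : SimpleGraph V) (m : ℕ) : ℕ :=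
  sInf {C : ℕ | Nonempty (G →g kneserGraph C m)}

/-!
Removing the two largest points gives Stahl's homomorphism `KG(n+2,k+1) → KG(n,k)`: a set
meeting `{n, n+1}` in `0`, `1` or `2` points loses its least point, keeps its part in `[n]`, or
gains the least point of `[n]` it misses. Iterating it `k - r` times colours `KG(n,k)` `r`-fold
with `n - 2k + 2r` colours; placing `q` copies of the identity colouring next to it on disjoint
palettes gives a `(qk + r)`-fold colouring with `(q+1)(n-2k) + 2(qk+r)` colours, and every
`m ≥ 1` is `qk + r` with `1 ≤ r ≤ k` and `q + 1 = ⌈m/k⌉`.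
-/

open Finset

theorem kneserGraph_adj_of_disjoint {n k : ℕ} (hk : 0 < k)
    {A B : {s : Finset (Fin n) // s.card = k}} (h : Disjoint A.1 B.1) :
    (kneserGraph n k).Adj A B := by
  refine ⟨?_, h⟩
  rintro rfl
  have hA := A.2
  rw [disjoint_self.mp h, bot_eq_empty, card_empty] at hA
  omega

section Append

variable {C₁ C₂ m₁ m₂ : ℕ}

def kneserAppend (s : {s : Finset (Fin C₁) // #s = m₁})
    (t : {t : Finset (Fin C₂) // #t = m₂}) :
    {u : Finset (Fin (C₁ + C₂)) // #u = m₁ + m₂} :=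
  ⟨(s.1.disjSum t.1).map finSumFinEquiv.toEmbedding, by rw [card_map, card_disjSum, s.2, t.2]⟩

theorem kneserAppend_inj {s s' : {s : Finset (Fin C₁) // #s = m₁}}
    {t t' : {t : Finset (Fin C₂) // #t = m₂}} :
    kneserAppend s t = kneserAppend s' t' ↔ s = s' ∧ t = t' := by
  simp [kneserAppend, Subtype.ext_iff]

theorem disjoint_kneserAppend {s s' : {s : Finset (Fin C₁) // #s = m₁}}
    {t t' : {t : Finset (Fin C₂) // #t = m₂}} (hs : Disjoint s.1 s'.1)
    (ht : Disjoint t.1 t'.1) :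
    Disjoint (kneserAppend s t).1 (kneserAppend s' t').1 := by
  rw [kneserAppend, kneserAppend, disjoint_map, disjoint_left]
  rintro (a | a) ha ha'
  · exact disjoint_left.mp hs (inl_mem_disjSum.mp ha) (inl_mem_disjSum.mp ha')
  · exact disjoint_left.mp ht (inr_mem_disjSum.mp ha) (inr_mem_disjSum.mp ha')

def SimpleGraph.Hom.kneserAppend {V : Type*} {G : SimpleGraph V} (f : G →g kneserGraph C₁ m₁)
    (g : G →g kneserGraph C₂ m₂) : G →g kneserGraph (C₁ + C₂) (m₁ + m₂) where
  toFun v := _root_.kneserAppend (f v) (g v)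
  map_rel' huv :=
    ⟨fun h => (f.map_adj huv).1 (kneserAppend_inj.mp h).1,
      disjoint_kneserAppend (f.map_adj huv).2 (g.map_adj huv).2⟩

end Append

theorem nonempty_hom_kneserGraph_mul_add {V : Type*} {G : SimpleGraph V} {C m D r : ℕ}
    (g : G →g kneserGraph C m) (f : G →g kneserGraph D r) (j : ℕ) :
    Nonempty (G →g kneserGraph (j * C + D) (j * m + r)) := by
  induction j with
  | zero => rw [zero_mul, zero_add, zero_mul, zero_add]; exact ⟨f⟩
  | succ j ih =>
    obtain ⟨h⟩ := ih
    rw [show (j + 1) * C + D = C + (j * C + D) by ring,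
      show (j + 1) * m + r = m + (j * m + r) by ring]
    exact ⟨g.kneserAppend h⟩

section Shrink

variable {n : ℕ}

def lowPart (A : Finset (Fin (n + 2))) : Finset (Fin n) :=
  {b | b.castLE (by omega) ∈ A}

def highCard (A : Finset (Fin (n + 2))) : ℕ :=
  #{a ∈ A | n ≤ a.val}

theorem mem_lowPart {A : Finset (Fin (n + 2))} {b : Fin n} :
    b ∈ lowPart A ↔ b.castLE (by omega) ∈ A := by
  simp [lowPart]

theorem card_lowPart_add_highCard (A : Finset (Fin (n + 2))) :
    #(lowPart A) + highCard A = #A := by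
  have hlow : (lowPart A).map (Fin.castLEEmb (by omega)) = {a ∈ A | a.val < n} := by
    ext a
    simp only [mem_map, mem_lowPart, Fin.castLEEmb_apply, mem_filter]
    constructor
    · rintro ⟨b, hb, rfl⟩
      exact ⟨hb, b.isLt⟩
    · rintro ⟨ha, hlt⟩
      exact ⟨⟨a, hlt⟩, ha, rfl⟩
  rw [highCard, ← card_map, hlow]
  simpa only [not_lt] using card_filter_add_card_filter_not (s := A) (fun a => a.val < n)

theorem highCard_add_highCard_le {A B : Finset (Fin (n + 2))} (h : Disjoint A B) :
    highCard A + highCard B ≤ 2 :=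
  calc highCard A + highCard B = #({a ∈ A | n ≤ a.val} ∪ {a ∈ B | n ≤ a.val}) :=
        (card_union_of_disjoint (h.mono (filter_subset _ _) (filter_subset _ _))).symm
    _ ≤ #(Ico n (n + 2)) := by
        refine card_le_card_of_injOn Fin.val (fun a ha => ?_) Fin.val_injective.injOn
        simp only [coe_union, coe_filter, Set.mem_union, Set.mem_ofPred_eq] at ha
        simp only [coe_Ico, Set.mem_Ico]
        omega
    _ = 2 := by simp

theorem disjoint_lowPart {A B : Finset (Fin (n + 2))} (h : Disjoint A B) :
    Disjoint (lowPart A) (lowPart B) :=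
  disjoint_filter.mpr fun _ _ hA hB => disjoint_left.mp h hA hB

-- The `else` fallbacks are taken only for `A = ∅` and `A = univ`.
def shrink (A : Finset (Fin (n + 2))) : Finset (Fin n) :=
  if highCard A = 0 then
    if h : (lowPart A).Nonempty then (lowPart A).erase ((lowPart A).min' h) else lowPart A
  else if highCard A = 1 then lowPart A
  else if h : (lowPart A)ᶜ.Nonempty then insert ((lowPart A)ᶜ.min' h) (lowPart A) else lowPart A

theorem shrink_subset_lowPart {A : Finset (Fin (n + 2))} (h : highCard A ≤ 1) :
    shrink A ⊆ lowPart A := by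
  unfold shrink
  split_ifs
  · exact erase_subset _ _
  all_goals first | exact Subset.rfl | omega

theorem card_shrink {k : ℕ} (hkn : k ≤ n) {A : Finset (Fin (n + 2))} (hA : #A = k + 1) :
    #(shrink A) = k := by
  have hcard := card_lowPart_add_highCard A
  have hhigh : highCard A ≤ 2 := by
    simpa [highCard] using highCard_add_highCard_le (disjoint_empty_right A)
  unfold shrink
  split_ifs with h0 hlow h1 hcompl
  · rw [card_erase_of_mem (min'_mem _ _)]
    omega
  · rw [not_nonempty_iff_eq_empty.mp hlow] at hcard ⊢
    rw [card_empty, zero_add] at hcard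
    omega
  · omega
  · rw [card_insert_of_notMem (mem_compl.mp (min'_mem _ hcompl))]
    omega
  · rw [not_nonempty_iff_eq_empty, compl_eq_empty_iff] at hcompl
    rw [hcompl, card_univ, Fintype.card_fin] at hcard
    omega

theorem disjoint_shrink_of_highCard {A B : Finset (Fin (n + 2))} (h : Disjoint A B)
    (hA₀ : highCard A ≠ 0) (hA₁ : highCard A ≠ 1) (hB : highCard B = 0) :
    Disjoint (shrink A) (shrink B) := by
  by_cases hne : (lowPart B).Nonempty
  swap
  · simp [shrink, hB, not_nonempty_iff_eq_empty.mp hne]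
  have hsub : lowPart B ⊆ (lowPart A)ᶜ := fun b hb =>
    mem_compl.mpr fun hb' => disjoint_left.mp (disjoint_lowPart h) hb' hb
  have hcompl : (lowPart A)ᶜ.Nonempty := hne.mono hsub
  simp only [shrink, hA₀, hA₁, hB, hne, hcompl, if_true, if_false, dite_true]
  rw [disjoint_insert_left]
  refine ⟨fun ha => ?_, (disjoint_lowPart h).mono_right (erase_subset _ _)⟩
  -- `lowPart B ⊆ (lowPart A)ᶜ`, so an added point lying in `lowPart B` is its erased minimum
  have hle : (lowPart A)ᶜ.min' hcompl ≤ (lowPart B).min' hne :=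
    min'_le _ _ (hsub (min'_mem _ _))
  exact ne_of_mem_erase ha (le_antisymm hle (min'_le _ _ (mem_of_mem_erase ha)))

theorem disjoint_shrink {A B : Finset (Fin (n + 2))} (h : Disjoint A B) :
    Disjoint (shrink A) (shrink B) := by
  have hsum := highCard_add_highCard_le h
  by_cases hA : highCard A ≤ 1
  · by_cases hB : highCard B ≤ 1
    · exact (disjoint_lowPart h).mono (shrink_subset_lowPart hA) (shrink_subset_lowPart hB)
    · exact (disjoint_shrink_of_highCard h.symm (by omega) (by omega) (by omega)).symm
  · exact disjoint_shrink_of_highCard h (by omega) (by omega) (by omega)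

def kneserShrinkHom {k : ℕ} (hk : 0 < k) (hkn : k ≤ n) :
    kneserGraph (n + 2) (k + 1) →g kneserGraph n k where
  toFun A := ⟨shrink A.1, card_shrink hkn A.2⟩
  map_rel' h := kneserGraph_adj_of_disjoint hk (disjoint_shrink h.2)

end Shrink

theorem nonempty_hom_kneserGraph_add_two_mul {n k : ℕ} (hk : 0 < k) (hkn : k ≤ n) (d : ℕ) :
    Nonempty (kneserGraph (n + 2 * d) (k + d) →g kneserGraph n k) := by
  induction d with
  | zero => exact ⟨SimpleGraph.Hom.id⟩
  | succ d ih =>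
    obtain ⟨f⟩ := ih
    rw [show n + 2 * (d + 1) = n + 2 * d + 2 by ring, ← add_assoc]
    exact ⟨f.comp (kneserShrinkHom (by omega) (by omega))⟩

theorem multiChrom_le_of_hom {V : Type*} {G : SimpleGraph V} {C m : ℕ}
    (f : G →g kneserGraph C m) : multiChrom G m ≤ C :=
  Nat.sInf_le ⟨f⟩

theorem multiChrom_kneserGraph_le {n k r : ℕ} (hr : 0 < r) (hrk : r ≤ k) (h : 2 * k ≤ n)
    (q : ℕ) :
    multiChrom (kneserGraph n k) (q * k + r) ≤ (q + 1) * (n - 2 * k) + 2 * (q * k + r) := by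
  obtain ⟨f⟩ :=
    nonempty_hom_kneserGraph_add_two_mul (n := n - 2 * (k - r)) hr (by omega) (k - r)
  rw [show n - 2 * (k - r) + 2 * (k - r) = n by omega, show r + (k - r) = k by omega] at f
  obtain ⟨g⟩ := nonempty_hom_kneserGraph_mul_add SimpleGraph.Hom.id f q
  refine (multiChrom_le_of_hom g).trans_eq ?_
  obtain ⟨e, rfl⟩ := Nat.exists_eq_add_of_le h
  rw [show 2 * k + e - 2 * (k - r) = e + 2 * r by omega, Nat.add_sub_cancel_left]
  ring

theorem stmt_12 (n k m : ℕ) (hm : 0 < m) (hk : 0 < k) (h : 2 * k ≤ n) :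
    multiChrom (kneserGraph n k) m ≤ (m + k - 1) / k * (n - 2 * k) + 2 * m := by
  obtain ⟨q, r, hr, hrk, rfl⟩ : ∃ q r, 0 < r ∧ r ≤ k ∧ m = q * k + r :=
    ⟨(m - 1) / k, (m - 1) % k + 1, by omega, Nat.mod_lt _ hk,
      by rw [mul_comm, ← add_assoc, Nat.div_add_mod]; omega⟩
  have hceil : (q * k + r + k - 1) / k = q + 1 := by
    rw [show q * k + r + k - 1 = r - 1 + (q + 1) * k by rw [add_mul, one_mul]; omega,
      Nat.add_mul_div_right _ _ hk, Nat.div_eq_of_lt (by omega), zero_add]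
  rw [hceil]
  exact multiChrom_kneserGraph_le hr hrk h q
end

section
/- The Schrijver graph SG(2k+1, k), whose vertices are the 2-stable k-subsets of [2k+1] with disjointness as adjacency, has chromatic number 3. -/
/-
Identify `Fin (2k+1)` with `ℤ/(2k+1)`. A 2-stable set is one containing no two consecutive
residues, so for a 2-stable `k`-set `S` the sets `S` and `S + 1` are disjoint and together miss a
single point `z`; walking around the cycle from `z` forces `S = {z+1, z+3, …, z+2k-1}`. Hence the
vertices of `SG(2k+1, k)` are the `2k+1` arcs `{r, r+2, …, r+2k-2}`, and two arcs are disjoint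
exactly when their starting points differ by `±1`. So `SG(2k+1, k)` is the odd cycle `C_{2k+1}`,
whose chromatic number is `3`.
-/

/-- `S ⊆ Fin n` is `s`-stable if any two distinct elements are at distance at
least `s` and at most `n - s`. -/
def SStable (n s : ℕ) (S : Finset (Fin n)) : Prop :=
  ∀ i ∈ S, ∀ j ∈ S, i ≠ j →
    (s : ℤ) ≤ |(i.val : ℤ) - (j.val : ℤ)| ∧ |(i.val : ℤ) - (j.val : ℤ)| ≤ (n : ℤ) - s

/-- The `s`-stable Kneser graph; for `s = 2` this is the Schrijver graph. -/
def stableKneser (n k s : ℕ) :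
    SimpleGraph {S : Finset (Fin n) // S.card = k ∧ SStable n s S} where
  Adj A B := A ≠ B ∧ Disjoint A.1 B.1
  symm := ⟨fun _ _ ⟨h1, h2⟩ => ⟨h1.symm, h2.symm⟩⟩
  loopless := ⟨fun _ ⟨h, _⟩ => h rfl⟩

open Fin.CommRing Finset

theorem Fin.val_sub_add_val_sub {n : ℕ} {a b : Fin n} (h : a ≠ b) :
    (a - b).val + (b - a).val = n := by
  rcases lt_or_gt_of_ne h with hab | hab
  · rw [Fin.coe_sub_iff_lt.mpr hab, Fin.sub_val_of_le hab.le]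
    have := b.isLt
    omega
  · rw [Fin.coe_sub_iff_lt.mpr hab, Fin.sub_val_of_le hab.le]
    have := a.isLt
    omega

theorem Fin.eq_add_one_iff {n : ℕ} {i j : Fin (n + 1)} :
    j = i + 1 ↔ j.val = i.val + 1 ∨ (i.val = n ∧ j.val = 0) := by
  rw [Fin.ext_iff, Fin.val_add_one]
  split_ifs with h
  · subst h
    have := j.isLt
    simp only [Fin.val_last, true_and]
    omega
  · have : i.val ≠ n := fun hi => h (Fin.ext hi)
    omega

theorem sstable_two_iff {n : ℕ} (hn : 1 ≤ n) (S : Finset (Fin (n + 1))) :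
    SStable (n + 1) 2 S ↔ ∀ x ∈ S, x + 1 ∉ S := by
  constructor
  · intro hS x hx hx1
    have hne : x ≠ x + 1 := by
      rw [Ne, Fin.eq_add_one_iff]
      omega
    have hdist := hS x hx (x + 1) hx1 hne
    have hsucc : (x + 1).val = x.val + 1 ∨ (x.val = n ∧ (x + 1).val = 0) :=
      Fin.eq_add_one_iff.mp rfl
    rw [le_abs', abs_le] at hdist
    omega
  · intro hS i hi j hj hij
    have hji : ¬ (j = i + 1) := fun h => hS i hi (h ▸ hj)
    have hij' : ¬ (i = j + 1) := fun h => hS j hj (h ▸ hi)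
    rw [Fin.eq_add_one_iff] at hji hij'
    have hval := Fin.val_ne_of_ne hij
    have hi := i.isLt
    have hj := j.isLt
    rw [le_abs', abs_le]
    omega

namespace stableKneser

variable {k : ℕ}

def arc (k : ℕ) (r : Fin (2 * k + 1)) : Finset (Fin (2 * k + 1)) :=
  (range k).image fun i => r + ((2 * i : ℕ) : Fin (2 * k + 1))

theorem mem_arc {r x : Fin (2 * k + 1)} :
    x ∈ arc k r ↔ ∃ i < k, r + ((2 * i : ℕ) : Fin (2 * k + 1)) = x := by
  simp [arc]

theorem mem_arc_iff {r x : Fin (2 * k + 1)} :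
    x ∈ arc k r ↔ (x - r).val % 2 = 0 ∧ (x - r).val < 2 * k := by
  simp only [mem_arc, ← eq_sub_iff_add_eq', Fin.ext_iff]
  constructor
  · rintro ⟨i, hi, h⟩
    rw [← h, Fin.val_cast_of_lt (by omega)]
    omega
  · rintro ⟨heven, hlt⟩
    refine ⟨(x - r).val / 2, by omega, ?_⟩
    rw [Fin.val_cast_of_lt (by omega)]
    omega

theorem self_mem_arc (hk : 1 ≤ k) (r : Fin (2 * k + 1)) : r ∈ arc k r := by
  rw [mem_arc_iff, sub_self, Fin.val_zero]
  omega

theorem card_arc (r : Fin (2 * k + 1)) : (arc k r).card = k := by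
  rw [arc, card_image_of_injOn, card_range]
  intro i hi j hj hij
  simp only [coe_range, Set.mem_Iio] at hi hj
  have := congrArg Fin.val (add_left_cancel hij)
  rw [Fin.val_cast_of_lt (by omega), Fin.val_cast_of_lt (by omega)] at this
  omega

theorem add_one_notMem_arc {r x : Fin (2 * k + 1)} (hx : x ∈ arc k r) : x + 1 ∉ arc k r := by
  rw [mem_arc_iff] at hx ⊢
  rw [add_sub_right_comm, Fin.val_add_one_of_lt (Fin.lt_def.mpr (by rw [Fin.val_last]; omega))]
  omega

theorem arc_sstable (hk : 1 ≤ k) (r : Fin (2 * k + 1)) : SStable (2 * k + 1) 2 (arc k r) :=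
  (sstable_two_iff (by omega) _).mpr fun _ => add_one_notMem_arc

theorem arc_injective (hk : 1 ≤ k) : Function.Injective (arc k) := by
  intro r s h
  by_contra hrs
  have hr := mem_arc_iff.mp (h ▸ self_mem_arc hk r)
  have hs := mem_arc_iff.mp (h.symm ▸ self_mem_arc hk s)
  have := Fin.val_sub_add_val_sub hrs
  omega

theorem disjoint_arc_of_val_sub_eq_one {r s : Fin (2 * k + 1)} (h : (s - r).val = 1) :
    Disjoint (arc k r) (arc k s) := by
  rw [disjoint_left]
  intro x hr hs
  rw [mem_arc_iff] at hr hs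
  rw [← sub_add_sub_cancel x s r, Fin.val_add_eq_of_add_lt (by omega)] at hr
  omega

theorem disjoint_arc_iff (hk : 1 ≤ k) {r s : Fin (2 * k + 1)} :
    Disjoint (arc k r) (arc k s) ↔ (r - s).val = 1 ∨ (s - r).val = 1 := by
  constructor
  · intro hd
    by_contra! h
    have hrs : r ≠ s := by
      rintro rfl
      exact disjoint_left.mp hd (self_mem_arc hk r) (self_mem_arc hk r)
    have hsum := Fin.val_sub_add_val_sub hrs
    rcases Nat.mod_two_eq_zero_or_one (s - r).val with heven | hodd
    · exact disjoint_left.mp hd (mem_arc_iff.mpr ⟨heven, by omega⟩) (self_mem_arc hk s)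
    · exact disjoint_left.mp hd (self_mem_arc hk r) (mem_arc_iff.mpr ⟨by omega, by omega⟩)
  · rintro (h | h)
    · exact (disjoint_arc_of_val_sub_eq_one h).symm
    · exact disjoint_arc_of_val_sub_eq_one h

theorem exists_eq_arc {S : Finset (Fin (2 * k + 1))} (hcard : S.card = k)
    (hS : ∀ x ∈ S, x + 1 ∉ S) : ∃ r, S = arc k r := by
  have hdisj : Disjoint S (S.image (· + 1)) :=
    disjoint_right.mpr fun _ hx => by
      obtain ⟨y, hy, rfl⟩ := mem_image.mp hx
      exact hS y hy
  have hcompl : (S ∪ S.image (· + 1))ᶜ.card = 1 := by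
    rw [card_compl, card_union_of_disjoint hdisj,
      card_image_of_injective _ (add_left_injective 1), hcard, Fintype.card_fin]
    omega
  obtain ⟨z, hz⟩ := card_eq_one.mp hcompl
  have hzS : z ∉ S := fun h => mem_compl.mp (hz ▸ mem_singleton_self z) (mem_union_left _ h)
  have hmem : ∀ x, x ≠ z → x - 1 ∉ S → x ∈ S := by
    intro x hxz hx
    have hxU : x ∈ S ∪ S.image (· + 1) := by
      by_contra h
      exact hxz (mem_singleton.mp (hz ▸ mem_compl.mpr h))
    rcases mem_union.mp hxU with h | h
    · exact h
    · obtain ⟨y, hy, rfl⟩ := mem_image.mp h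
      exact absurd (by simpa using hy) hx
  have hne : ∀ m, 0 < m → m < 2 * k + 1 → z + (m : Fin (2 * k + 1)) ≠ z := by
    intro m hm0 hm h
    have := congrArg Fin.val (add_eq_left.mp h)
    rw [Fin.val_cast_of_lt hm, Fin.val_zero] at this
    omega
  have hodd : ∀ i < k, z + ((2 * i + 1 : ℕ) : Fin (2 * k + 1)) ∈ S := by
    intro i
    induction i with
    | zero =>
      intro _
      exact hmem _ (hne _ (by omega) (by omega)) (by simpa using hzS)
    | succ i ih =>
      intro hi
      refine hmem _ (hne _ (by omega) (by omega)) ?_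
      rw [show z + ((2 * (i + 1) + 1 : ℕ) : Fin (2 * k + 1)) - 1
          = z + ((2 * i + 1 : ℕ) : Fin (2 * k + 1)) + 1 by push_cast; ring]
      exact hS _ (ih (by omega))
  refine ⟨z + 1, (eq_of_subset_of_card_le (fun x hx => ?_) (by rw [hcard, card_arc])).symm⟩
  obtain ⟨i, hi, rfl⟩ := mem_arc.mp hx
  rw [show z + 1 + ((2 * i : ℕ) : Fin (2 * k + 1)) = z + ((2 * i + 1 : ℕ) : Fin (2 * k + 1)) by
    push_cast; ring]
  exact hodd i hi

noncomputable def cycleGraphIso (hk : 1 ≤ k) :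
    SimpleGraph.cycleGraph (2 * k + 1) ≃g stableKneser (2 * k + 1) k 2 where
  toEquiv := Equiv.ofBijective (fun r => ⟨arc k r, card_arc r, arc_sstable hk r⟩)
    ⟨fun _ _ h => arc_injective hk (congrArg Subtype.val h), fun S =>
      (exists_eq_arc S.2.1 ((sstable_two_iff (by omega) _).mp S.2.2)).imp
        fun _ h => Subtype.ext h.symm⟩
  map_rel_iff' {r s} := by
    simp only [stableKneser, SimpleGraph.cycleGraph_adj', ← disjoint_arc_iff hk]
    refine and_iff_right_of_imp fun hd heq => ?_
    have harc : arc k r = arc k s := congrArg Subtype.val heq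
    exact disjoint_left.mp hd (self_mem_arc hk r) (harc ▸ self_mem_arc hk r : r ∈ arc k s)

end stableKneser

theorem stmt_16 (k : ℕ) (hk : 1 ≤ k) :
    (stableKneser (2 * k + 1) k 2).chromaticNumber = 3 := by
  rw [← SimpleGraph.chromaticNumber_congr (stableKneser.cycleGraphIso hk)]
  exact SimpleGraph.chromaticNumber_cycleGraph_of_odd _ (by omega) (odd_two_mul_add_one k)
end

section
/- The Schrijver graph SG(n, 2) (n ≥ 4), whose vertices are the 2-stable 2-subsets of [n], has chromatic number n − 2. -/
/-!
Coloring a pair by its smaller element, capped at `n - 3`, uses `n - 2` colors: two disjoint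
pairs cannot both lie in the last three points.

For the lower bound we induct on `n`. A color class is an intersecting family of pairs, so either
all its members share a point `p` (a star), or it is contained in the three sides of a triangle.
If some class of an `(n - 2)`-coloring of `SG(n + 1, 2)` is a star at `p`, the other classes
color the copy of `SG(n, 2)` on the points other than `p` with `n - 3` colors, contradicting
the induction hypothesis. Otherwise every class has at most three members, which is too few to
cover the vertices once `n + 1 ≥ 7`; for `n + 1 ∈ {5, 6}` the vertex `{0, 3}` lies on no
triangle of stable pairs.
-/

open Finset

instance (n s : ℕ) : DecidablePred (SStable n s) := fun _ => by
  unfold SStable; infer_instance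

abbrev SchrijverVertex (n : ℕ) : Type := {S : Finset (Fin n) // #S = 2 ∧ SStable n 2 S}

lemma sstable_pair_iff {n s : ℕ} {a b : Fin n} (hab : a ≠ b) :
    SStable n s {a, b} ↔ (s : ℤ) ≤ |(a : ℤ) - b| ∧ |(a : ℤ) - b| ≤ n - s := by
  refine ⟨fun h => h a (by simp) b (by simp) hab, fun h i hi j hj hij => ?_⟩
  simp only [mem_insert, mem_singleton] at hi hj
  rcases hi with rfl | rfl <;> rcases hj with rfl | rfl
  · exact absurd rfl hij
  · exact h
  · rwa [abs_sub_comm]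
  · exact absurd rfl hij

def gapVertex {n : ℕ} (i d : ℕ) (hd : 2 ≤ d) (hdn : d + 2 ≤ n) (hi : i + d < n) :
    SchrijverVertex n :=
  have hne : (⟨i, by omega⟩ : Fin n) ≠ ⟨i + d, hi⟩ := by simp; omega
  ⟨{⟨i, by omega⟩, ⟨i + d, hi⟩}, card_pair hne, (sstable_pair_iff hne).2 (by
    simp only [Nat.cast_add, abs_le, le_abs']; omega)⟩

theorem stableKneser_two_colorable (n s : ℕ) (hn : 3 ≤ n) :
    (stableKneser n 2 s).Colorable (n - 2) := by
  let least (A : {S : Finset (Fin n) // #S = 2 ∧ SStable n s S}) : Fin n :=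
    A.1.min' (card_pos.1 (by rw [A.2.1]; norm_num))
  have least_mem A : least A ∈ A.1 := min'_mem _ _
  have least_le A : ∀ x ∈ A.1, least A ≤ x := fun x hx => min'_le _ _ hx
  refine ⟨.mk (fun A => ⟨min (least A) (n - 3), by omega⟩) ?_⟩
  rintro A B ⟨-, hAB⟩ hcol
  simp only [Fin.mk.injEq] at hcol
  by_cases h : (least A : ℕ) < n - 3
  · have : least A = least B := Fin.ext (by omega)
    exact disjoint_left.1 hAB (least_mem A) (this ▸ least_mem B)
  · have hsub : A.1 ∪ B.1 ⊆ Ici ⟨n - 3, by omega⟩ := by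
      intro x hx
      rw [mem_Ici, Fin.le_def, Fin.val_mk]
      rcases mem_union.1 hx with hx | hx
      · exact le_trans (by omega) (Fin.le_def.1 (least_le A x hx))
      · exact le_trans (by omega) (Fin.le_def.1 (least_le B x hx))
    have := card_le_card hsub
    rw [card_union_of_disjoint hAB, A.2.1, B.2.1, Fin.card_Ici, Fin.val_mk] at this
    omega

lemma Fin.val_succAbove_eq {m : ℕ} (p : Fin (m + 1)) (i : Fin m) :
    (p.succAbove i : ℕ) = if (i : ℕ) < p then (i : ℕ) else (i : ℕ) + 1 := by
  unfold Fin.succAbove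
  split_ifs <;> simp_all [Fin.lt_def]

lemma SStable.map_succAbove {m s : ℕ} {S : Finset (Fin m)} (hS : SStable m s S)
    (p : Fin (m + 1)) : SStable (m + 1) s (S.map p.succAboveEmb) := by
  simp only [SStable, mem_map, Fin.coe_succAboveEmb]
  rintro _ ⟨i, hi, rfl⟩ _ ⟨j, hj, rfl⟩ hij
  have hd := hS i hi j hj (ne_of_apply_ne _ hij)
  have hi' := p.val_succAbove_eq i
  have hj' := p.val_succAbove_eq j
  have hmono : (i : ℕ) < j ↔ (p.succAbove i : ℕ) < p.succAbove j := by
    rw [← Fin.lt_def, ← Fin.lt_def, Fin.succAbove_lt_succAbove_iff]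
  simp only [abs_le, le_abs'] at hd ⊢
  split_ifs at hi' hj' <;> push_cast <;> omega

def stableKneserSuccAboveHom (m k s : ℕ) (p : Fin (m + 1)) :
    stableKneser m k s →g stableKneser (m + 1) k s where
  toFun A := ⟨A.1.map p.succAboveEmb, by rw [card_map, A.2.1], A.2.2.map_succAbove p⟩
  map_rel' := fun ⟨hne, hAB⟩ =>
    ⟨fun h => hne (Subtype.ext (map_injective _ (congrArg Subtype.val h))),
      disjoint_map _ |>.2 hAB⟩

namespace Finset

lemma exists_eq_pair_of_mem {α : Type*} [DecidableEq α] {B : Finset α} (hB : #B = 2)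
    {x : α} (hx : x ∈ B) : ∃ y, y ≠ x ∧ B = {x, y} := by
  obtain ⟨p, q, hpq, rfl⟩ := card_eq_two.1 hB
  rcases mem_insert.1 hx with rfl | hx
  · exact ⟨q, hpq.symm, rfl⟩
  · rw [mem_singleton.1 hx]; exact ⟨p, hpq, pair_comm _ _⟩

lemma subset_triple_of_not_disjoint {α : Type*} [DecidableEq α] {a b c : α} (hab : a ≠ b)
    (hbc : b ≠ c) (hac : a ≠ c) {E : Finset α} (hE : #E = 2) (h₁ : ¬Disjoint E {a, b})
    (h₂ : ¬Disjoint E {b, c}) (h₃ : ¬Disjoint E {a, c}) : E ⊆ {a, b, c} := by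
  obtain ⟨p, q, hpq, rfl⟩ := card_eq_two.1 hE
  simp only [disjoint_insert_left, disjoint_insert_right, disjoint_singleton, mem_insert,
    mem_singleton] at h₁ h₂ h₃
  intro x hx
  simp only [mem_insert, mem_singleton] at hx ⊢
  grind

end Finset

theorem exists_triangle_of_intersecting {α : Type*} [DecidableEq α] {𝒞 : Finset (Finset α)}
    (h𝒞 : ∀ A ∈ 𝒞, #A = 2) (hint : (𝒞 : Set (Finset α)).Intersecting)
    (hstar : ∀ v, ∃ A ∈ 𝒞, v ∉ A) {a b : α} (hab : {a, b} ∈ 𝒞) :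
    ∃ c, {a, c} ∈ 𝒞 ∧ {b, c} ∈ 𝒞 ∧ ∀ E ∈ 𝒞, E ⊆ {a, b, c} := by
  have hab' : a ≠ b := card_pair_eq_two_iff.1 (h𝒞 _ hab)
  obtain ⟨B, hB, haB⟩ := hstar a
  have hbB : b ∈ B := by simpa [disjoint_insert_left, haB] using hint hab hB
  obtain ⟨c, hcb, rfl⟩ := exists_eq_pair_of_mem (h𝒞 B hB) hbB
  have hac : a ≠ c := by rintro rfl; simp at haB
  obtain ⟨D, hD, hbD⟩ := hstar b
  have haD : a ∈ D := by simpa [disjoint_insert_left, hbD] using hint hab hD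
  have hcD : c ∈ D := by simpa [disjoint_insert_left, hbD] using hint hB hD
  obtain rfl : D = {a, c} := (eq_of_subset_of_card_le (by simp [insert_subset_iff, haD, hcD])
    (by rw [h𝒞 D hD, card_pair hac])).symm
  exact ⟨c, hD, hB, fun E hE => subset_triple_of_not_disjoint hab' hcb.symm hac (h𝒞 E hE)
    (hint hE hab) (hint hE hB) (hint hE hD)⟩

theorem card_le_three_of_intersecting {α : Type*} [DecidableEq α] {𝒞 : Finset (Finset α)}
    (h𝒞 : ∀ A ∈ 𝒞, #A = 2) (hint : (𝒞 : Set (Finset α)).Intersecting)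
    (hstar : ∀ v, ∃ A ∈ 𝒞, v ∉ A) : #𝒞 ≤ 3 := by
  obtain rfl | ⟨A, hA⟩ := 𝒞.eq_empty_or_nonempty
  · simp
  obtain ⟨a, b, -, rfl⟩ := card_eq_two.1 (h𝒞 A hA)
  obtain ⟨c, -, -, hsub⟩ := exists_triangle_of_intersecting h𝒞 hint hstar hA
  calc #𝒞 ≤ #(powersetCard 2 {a, b, c}) :=
        card_le_card fun E hE => mem_powersetCard.2 ⟨hsub E hE, h𝒞 E hE⟩
    _ ≤ Nat.choose 3 2 := by rw [card_powersetCard]; exact Nat.choose_le_choose 2 card_le_three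
    _ = 3 := rfl

section ColorFamily

variable {n k s : ℕ} {α : Type*} [DecidableEq α] (C : (stableKneser n k s).Coloring α)

def colorFamily (c : α) : Finset (Finset (Fin n)) :=
  (univ.filter (C · = c)).map (Function.Embedding.subtype _)

variable {C}

lemma mem_colorFamily {c : α} {S : Finset (Fin n)} :
    S ∈ colorFamily C c ↔ ∃ A, C A = c ∧ A.1 = S := by
  simp only [colorFamily, mem_map, mem_filter, mem_univ, true_and,
    Function.Embedding.subtype_apply]

lemma card_colorFamily (c : α) : #(colorFamily C c) = #(univ.filter (C · = c)) := card_map _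

lemma card_of_mem_colorFamily {c : α} {S : Finset (Fin n)} (hS : S ∈ colorFamily C c) :
    #S = k := by
  obtain ⟨A, -, rfl⟩ := mem_colorFamily.1 hS
  exact A.2.1

lemma sstable_of_mem_colorFamily {c : α} {S : Finset (Fin n)} (hS : S ∈ colorFamily C c) :
    SStable n s S := by
  obtain ⟨A, -, rfl⟩ := mem_colorFamily.1 hS
  exact A.2.2

lemma intersecting_colorFamily (hk : k ≠ 0) (c : α) :
    (colorFamily C c : Set (Finset (Fin n))).Intersecting := by
  rintro _ hA _ hB hAB
  obtain ⟨A, hAc, rfl⟩ := mem_colorFamily.1 hA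
  obtain ⟨B, hBc, rfl⟩ := mem_colorFamily.1 hB
  obtain rfl | hne := eq_or_ne A B
  · have : #A.1 = 0 := by rw [disjoint_self.1 hAB]; rfl
    exact hk (A.2.1 ▸ this)
  · exact C.valid ⟨hne, hAB⟩ (hAc.trans hBc.symm)

end ColorFamily

lemma colorable_card_sub_one_of_forall_mem {m k s : ℕ} {α : Type*} [Fintype α] [DecidableEq α]
    (C : (stableKneser (m + 1) k s).Coloring α) (c : α) (p : Fin (m + 1))
    (hp : ∀ S ∈ colorFamily C c, p ∈ S) :
    (stableKneser m k s).Colorable (Fintype.card α - 1) := by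
  let φ := stableKneserSuccAboveHom m k s p
  have hφ A : p ∉ (φ A).1 := by
    simp [φ, stableKneserSuccAboveHom, Fin.succAbove_ne]
  let D : (stableKneser m k s).Coloring {β // β ≠ c} :=
    .mk (fun A => ⟨C (φ A), fun h => hφ A (hp _ (mem_colorFamily.2 ⟨_, h, rfl⟩))⟩)
      fun hAB h => C.valid (φ.map_rel hAB) (congrArg Subtype.val h)
  simpa [Fintype.card_subtype_compl] using D.colorable

theorem three_mul_lt_card_schrijverVertex {N : ℕ} (hN : 7 ≤ N) :
    3 * (N - 3) < Fintype.card (SchrijverVertex N) := by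
  -- the pairs `{i, i + d}` with `2 ≤ d ≤ 5` are stable since `N ≥ 7`, and there are `4N - 14`
  let D : Finset (Σ _ : ℕ, ℕ) := (range 4).sigma fun d => range (N - (d + 2))
  have hD : #D = 4 * N - 14 := by
    simp only [D, card_sigma, sum_range_succ, sum_range_zero, card_range]
    omega
  let gap (p : Σ _ : ℕ, ℕ) : Finset ℕ := {p.2, p.2 + (p.1 + 2)}
  let val (A : SchrijverVertex N) : Finset ℕ := A.1.map Fin.valEmbedding
  have hmaps : Set.MapsTo gap D (univ.image val) := by
    rintro ⟨d, i⟩ hp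
    simp only [D, coe_sigma, Set.mem_sigma_iff, coe_range, Set.mem_Iio] at hp
    exact mem_image.2 ⟨gapVertex i (d + 2) (by omega) (by omega) (by omega), mem_univ _,
      by simp [val, gapVertex, gap]⟩
  have hinj : Set.InjOn gap D := by
    rintro ⟨d, i⟩ - ⟨d', i'⟩ - h
    have h₁ : i ∈ gap ⟨d', i'⟩ := h ▸ by simp [gap]
    have h₂ : i + (d + 2) ∈ gap ⟨d', i'⟩ := h ▸ by simp [gap]
    have h₃ : i' ∈ gap ⟨d, i⟩ := h ▸ by simp [gap]
    simp only [gap, mem_insert, mem_singleton] at h₁ h₂ h₃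
    obtain ⟨rfl, rfl⟩ : d = d' ∧ i = i' := by omega
    rfl
  calc 3 * (N - 3) < #D := by omega
    _ ≤ #(univ.image val) := card_le_card_of_injOn gap hmaps hinj
    _ ≤ Fintype.card (SchrijverVertex N) := card_image_le

lemma not_colorable_four : ¬(stableKneser 4 2 2).Colorable 1 := by
  have hadj : (stableKneser 4 2 2).Adj (gapVertex 0 2 le_rfl le_rfl (by norm_num))
      (gapVertex 1 2 le_rfl le_rfl (by norm_num)) := ⟨by decide, by decide⟩
  rintro ⟨C⟩
  exact C.valid hadj (Subsingleton.elim _ _)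

lemma exists_star_colorFamily {N : ℕ} (hN : 5 ≤ N)
    (C : (stableKneser N 2 2).Coloring (Fin (N - 3))) :
    ∃ c p, ∀ S ∈ colorFamily C c, p ∈ S := by
  by_contra! hstar
  have hint c := intersecting_colorFamily (C := C) two_ne_zero c
  have hcard c : ∀ S ∈ colorFamily C c, #S = 2 := fun _ => card_of_mem_colorFamily
  by_cases h7 : 7 ≤ N
  · have hle : Fintype.card (SchrijverVertex N) ≤ 3 * (N - 3) :=
      calc Fintype.card (SchrijverVertex N) = #(univ : Finset (SchrijverVertex N)) :=
            card_univ.symm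
        _ ≤ 3 * #(univ.image C) := card_le_mul_card_image _ 3 fun c _ =>
            card_colorFamily c ▸ card_le_three_of_intersecting (hcard c) (hint c) (hstar c)
        _ ≤ 3 * (N - 3) := by
            gcongr; exact (card_le_univ _).trans_eq (Fintype.card_fin _)
    exact (three_mul_lt_card_schrijverVertex h7).not_ge hle
  · -- for `N ≤ 6`, no point is stable to both `0` and `3`
    let W := gapVertex 0 3 (by norm_num) (by omega) (by omega)
    obtain ⟨x, h0x, h3x, -⟩ := exists_triangle_of_intersecting (hcard (C W)) (hint (C W))
      (hstar (C W)) (mem_colorFamily.2 ⟨W, rfl, rfl⟩)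
    have h0 := (sstable_pair_iff (card_pair_eq_two_iff.1 (hcard _ _ h0x))).1
      (sstable_of_mem_colorFamily h0x)
    have h3 := (sstable_pair_iff (card_pair_eq_two_iff.1 (hcard _ _ h3x))).1
      (sstable_of_mem_colorFamily h3x)
    simp only [abs_le, le_abs'] at h0 h3
    omega

theorem not_colorable_stableKneser_two_two {N : ℕ} (hN : 4 ≤ N) :
    ¬(stableKneser N 2 2).Colorable (N - 3) := by
  induction N, hN using Nat.le_induction with
  | base => exact not_colorable_four
  | succ N hN ih =>
    rintro ⟨C⟩
    obtain ⟨c, p, hp⟩ := exists_star_colorFamily (by omega) C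
    have := colorable_card_sub_one_of_forall_mem C c p hp
    rw [Fintype.card_fin, show N + 1 - 3 - 1 = N - 3 by omega] at this
    exact ih this

theorem stmt_17 (n : ℕ) (hn : 4 ≤ n) :
    (stableKneser n 2 2).chromaticNumber = ((n - 2 : ℕ) : ℕ∞) := by
  obtain ⟨m, rfl⟩ : ∃ m, n = m + 3 := ⟨n - 3, by omega⟩
  rw [show m + 3 - 2 = m + 1 by omega, Nat.cast_succ,
    SimpleGraph.chromaticNumber_eq_iff_colorable_not_colorable]
  exact ⟨stableKneser_two_colorable (m + 3) 2 (by omega),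
    not_colorable_stableKneser_two_two hn⟩
end
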